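/- arXiv:2211.12348 — 2 statements merged into one kernel-verified Lean document; each statement's English description precedes it below -/
import Mathlib

section
/- Let X be a symmetric random variable with Λ finite near 0 and with regular upper tails, i.e. P(X > t) = exp(−(1+o(1))Λ*(t)) as t → ∞, and suppose X is not almost surely 0. Let α > 0 and let ω_n be a positive sequence with ω_n → ∞ and ω_n = n^{o(1)}. Define x_n = inf{t > 0 : P(X > t) ≤ ω_n n^{−α}}. Then for all large n, (1 − o(1)) Λ*⁻¹(α log n) ≤ x_n ≤ Λ*⁻¹(α log n). -/
open MeasureTheory ProbabilityTheory Real Filter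

noncomputable section

-- Log-moment generating function `Λ`, valued in `EReal` (`⊤` when the exponential
-- moment is infinite).
open Classical in
def lmgf {Ω : Type*} [MeasurableSpace Ω] (μ : Measure Ω) (X : Ω → ℝ) (s : ℝ) : EReal :=
  if Integrable (fun ω => Real.exp (s * X ω)) μ
  then ((Real.log (∫ ω, Real.exp (s * X ω) ∂μ) : ℝ) : EReal)
  else ⊤

/-- The Legendre transform `Λ*` of the log-moment generating function (rate function). -/
def rateFn {Ω : Type*} [MeasurableSpace Ω] (μ : Measure Ω) (X : Ω → ℝ) (t : ℝ) : EReal :=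
  ⨆ s : ℝ, ((s * t : ℝ) : EReal) - lmgf μ X s

/-- The generalised inverse `Λ*⁻¹(t) = inf {s ≥ 0 : Λ*(s) ≥ t}`. -/
def rateFnInv {Ω : Type*} [MeasurableSpace Ω] (μ : Measure Ω) (X : Ω → ℝ) (t : ℝ) : ℝ :=
  sInf {s : ℝ | 0 ≤ s ∧ (t : EReal) ≤ rateFn μ X s}

/-- `X` is symmetric: `-X` has the same distribution as `X`. -/
def SymmetricRV {Ω : Type*} [MeasurableSpace Ω] (μ : Measure Ω) (X : Ω → ℝ) : Prop :=
  Measure.map X μ = Measure.map (fun ω => -X ω) μ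

/-- `Λ` is finite in a neighbourhood of `0`. -/
def FiniteLmgfNearZero {Ω : Type*} [MeasurableSpace Ω] (μ : Measure Ω) (X : Ω → ℝ) : Prop :=
  ∃ δ > (0:ℝ), ∀ s : ℝ, |s| < δ → lmgf μ X s ≠ ⊤

/-- `X` has regular upper tails: `P(X > t) = exp(-(1+o(1)) Λ*(t))` as `t → ∞`
(vacuous at points where `Λ*(t) = ∞`). -/
def RegularUpperTails {Ω : Type*} [MeasurableSpace Ω] (μ : Measure Ω) (X : Ω → ℝ) : Prop :=
  ∀ ε > (0:ℝ), ∀ᶠ t in atTop, ∀ r : ℝ, rateFn μ X t = (r : EReal) →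
    Real.exp (-(1+ε)*r) ≤ (μ {ω | t < X ω}).toReal ∧
    (μ {ω | t < X ω}).toReal ≤ Real.exp (-(1-ε)*r)

/-- A good random variable: symmetric, `Λ` finite near `0`, regular upper tails. -/
def Good {Ω : Type*} [MeasurableSpace Ω] (μ : Measure Ω) (X : Ω → ℝ) : Prop :=
  SymmetricRV μ X ∧ FiniteLmgfNearZero μ X ∧ RegularUpperTails μ X

/-- The non-diagonal elements of `Sym2 (Fin n)`: the edges of the complete graph `K_n`. -/
abbrev EdgeT (n : ℕ) := {e : Sym2 (Fin n) // ¬ e.IsDiag}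


/-- Total weight of a subgraph `G'` of `K_n` with edge weights `x`. -/
def graphWeight {n : ℕ} (x : EdgeT n → ℝ) (G' : SimpleGraph (Fin n)) : ℝ :=
  ∑ e : EdgeT n, Set.indicator {e' : EdgeT n | (e' : Sym2 (Fin n)) ∈ G'.edgeSet} x e

/-- Total weight of the edges of a walk `p` with edge weights `x`. -/
def walkWeight {n : ℕ} (x : EdgeT n → ℝ) {u v : Fin n}
    (p : (⊤ : SimpleGraph (Fin n)).Walk u v) : ℝ :=
  ∑ e : EdgeT n, Set.indicator {e' : EdgeT n | (e' : Sym2 (Fin n)) ∈ p.edges} x e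

end

/-!
The upper bound is Chernoff's inequality: `Λ*` is nondecreasing on `[0, ∞)` because `Λ ≥ 0` for a
symmetric variable, so `Λ* ≥ α log n` beyond `Λ*⁻¹(α log n)` and the tail there is at most
`n^{-α} ≤ ω_n n^{-α}`.

For the lower bound fix `δ ∈ (0, 1)` and put `R = Λ*⁻¹(c)`. Since `Λ*` is convex with `Λ*(0) = 0`,
`Λ*((1 - δ) R) ≤ (1 - δ/2) Λ*((1 - δ) R / (1 - δ/2)) ≤ (1 - δ/2) c`, so by regularity of the
tails `P(X > (1 - δ) R) ≥ e^{-(1 - δ/4) c}` once `R` is large. If instead `Λ*⁻¹` stays bounded,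
`P(X > (1 - δ) R)` stays bounded away from `0`, because `Λ* = ∞` beyond the essential supremum
of `X`. Either way `P(X > (1 - δ) R) ≫ ω_n n^{-α}` for `c = α log n`, since `ω_n = n^{o(1)}`.
-/

open Topology

section RateFunction

variable {Ω : Type*} [MeasurableSpace Ω] {μ : Measure Ω} {X : Ω → ℝ}

lemma lmgf_of_integrable {s : ℝ} (h : Integrable (fun ω => exp (s * X ω)) μ) :
    lmgf μ X s = (cgf X μ s : EReal) := by
  simp [lmgf, h, cgf, mgf]

lemma lmgf_of_not_integrable {s : ℝ} (h : ¬ Integrable (fun ω => exp (s * X ω)) μ) :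
    lmgf μ X s = ⊤ := by
  simp [lmgf, h]

lemma coe_sub_cgf_le_rateFn {s t : ℝ} (h : Integrable (fun ω => exp (s * X ω)) μ) :
    ((s * t - cgf X μ s : ℝ) : EReal) ≤ rateFn μ X t := by
  rw [EReal.coe_sub, ← lmgf_of_integrable h]
  exact le_iSup (fun u => ((u * t : ℝ) : EReal) - lmgf μ X u) s

lemma rateFn_nonneg [IsProbabilityMeasure μ] (t : ℝ) : 0 ≤ rateFn μ X t := by
  simpa using coe_sub_cgf_le_rateFn (μ := μ) (X := X) (s := 0) (t := t) (by simp)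

lemma exists_le_rateFn (hfin : FiniteLmgfNearZero μ X) (c : ℝ) :
    ∃ t, 0 ≤ t ∧ (c : EReal) ≤ rateFn μ X t := by
  obtain ⟨δ, hδ, hδfin⟩ := hfin
  have hs : 0 < δ / 2 := by positivity
  have hint : Integrable (fun ω => exp (δ / 2 * X ω)) μ := by
    by_contra h
    exact hδfin (δ / 2) (by rw [abs_of_pos hs]; linarith) (lmgf_of_not_integrable h)
  set t := max 0 ((c + cgf X μ (δ / 2)) / (δ / 2))
  have hct : c + cgf X μ (δ / 2) ≤ t * (δ / 2) := (div_le_iff₀ hs).1 (le_max_right _ _)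
  refine ⟨t, le_max_left _ _, le_trans ?_ (coe_sub_cgf_le_rateFn hint)⟩
  exact EReal.coe_le_coe_iff.2 (by linarith)

section NonnegLmgf

variable (hΛ : ∀ s, 0 ≤ lmgf μ X s)
include hΛ

lemma cgf_nonneg_of_lmgf_nonneg {s : ℝ} (h : Integrable (fun ω => exp (s * X ω)) μ) :
    0 ≤ cgf X μ s := by
  simpa [lmgf_of_integrable h] using hΛ s

lemma rateFn_monotoneOn [IsProbabilityMeasure μ] : MonotoneOn (rateFn μ X) (Set.Ici 0) := by
  intro s hs t _ hst
  refine iSup_le fun u => ?_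
  rcases le_or_gt 0 u with hu | hu
  · calc ((u * s : ℝ) : EReal) - lmgf μ X u ≤ ((u * t : ℝ) : EReal) - lmgf μ X u :=
          EReal.sub_le_sub (EReal.coe_le_coe_iff.2 (mul_le_mul_of_nonneg_left hst hu)) le_rfl
      _ ≤ rateFn μ X t := le_iSup (fun v => ((v * t : ℝ) : EReal) - lmgf μ X v) u
  · calc ((u * s : ℝ) : EReal) - lmgf μ X u ≤ ((u * s : ℝ) : EReal) - 0 :=
          EReal.sub_le_sub le_rfl (hΛ u)
      _ ≤ 0 := by
          rw [sub_zero]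
          exact EReal.coe_nonpos.2 (mul_nonpos_of_nonpos_of_nonneg hu.le hs)
      _ ≤ rateFn μ X t := rateFn_nonneg t

lemma rateFn_mul_le {s c l : ℝ} (hl0 : 0 ≤ l) (hl1 : l ≤ 1) (hc : rateFn μ X s ≤ c) :
    rateFn μ X (l * s) ≤ ((l * c : ℝ) : EReal) := by
  refine iSup_le fun u => ?_
  by_cases h : Integrable (fun ω => exp (u * X ω)) μ
  · have hΛu := cgf_nonneg_of_lmgf_nonneg hΛ h
    have hu : u * s - cgf X μ u ≤ c :=
      EReal.coe_le_coe_iff.1 ((coe_sub_cgf_le_rateFn h).trans hc)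
    rw [lmgf_of_integrable h, ← EReal.coe_sub, EReal.coe_le_coe_iff]
    -- `u (l s) - Λ(u) = l (u s - Λ(u)) - (1 - l) Λ(u)`
    nlinarith
  · simp [lmgf_of_not_integrable h]

lemma measure_ge_le_exp_neg_of_lt_rateFn [IsProbabilityMeasure μ] {u b : ℝ} (hu : 0 < u)
    (hb : (b : EReal) < rateFn μ X u) : (μ {ω | u ≤ X ω}).toReal ≤ exp (-b) := by
  rcases le_or_gt b 0 with hb0 | hb0
  · exact measureReal_le_one.trans (one_le_exp (by linarith))
  obtain ⟨s, hs⟩ := lt_iSup_iff.1 hb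
  by_cases h : Integrable (fun ω => exp (s * X ω)) μ
  · rw [lmgf_of_integrable h, ← EReal.coe_sub, EReal.coe_lt_coe_iff] at hs
    have hΛs := cgf_nonneg_of_lmgf_nonneg hΛ h
    have hspos : 0 < s := pos_of_mul_pos_left (by linarith) hu.le
    calc (μ {ω | u ≤ X ω}).toReal ≤ exp (-s * u + cgf X μ s) := measure_ge_le_exp_cgf u hspos.le h
      _ ≤ exp (-b) := exp_le_exp.2 (by linarith)
  · simp [lmgf_of_not_integrable h] at hs

lemma measure_gt_le_exp_neg [IsProbabilityMeasure μ] {r c : ℝ} (hr : 0 ≤ r)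
    (h : ∀ u, r < u → (c : EReal) ≤ rateFn μ X u) : (μ {ω | r < X ω}).toReal ≤ exp (-c) := by
  have hsets : Monotone fun k : ℕ => {ω | r + 1 / (k + 1) ≤ X ω} := fun k l hkl ω hω =>
    le_trans (by gcongr : r + 1 / ((l : ℝ) + 1) ≤ r + 1 / (k + 1)) hω
  have hunion : (⋃ k : ℕ, {ω | r + 1 / (k + 1) ≤ X ω}) = {ω | r < X ω} := by
    ext ω
    simp only [Set.mem_iUnion, Set.mem_ofPred_eq]
    refine ⟨fun ⟨k, hk⟩ => lt_of_lt_of_le (lt_add_of_pos_right r Nat.one_div_pos_of_nat) hk,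
      fun hω => ?_⟩
    obtain ⟨k, hk⟩ := exists_nat_one_div_lt (sub_pos.2 hω)
    exact ⟨k, by linarith⟩
  have htail : Tendsto (fun k : ℕ => (μ {ω | r + 1 / (k + 1) ≤ X ω}).toReal) atTop
      (𝓝 (μ {ω | r < X ω}).toReal) :=
    (ENNReal.tendsto_toReal (measure_ne_top μ _)).comp
      (hunion ▸ tendsto_measure_iUnion_atTop hsets)
  have hexp : Tendsto (fun k : ℕ => exp (-(c - 1 / (k + 1)))) atTop (𝓝 (exp (-c))) := by
    simpa using ((tendsto_one_div_add_atTop_nhds_zero_nat.const_sub c).neg).rexp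
  refine le_of_tendsto_of_tendsto' htail hexp fun k => ?_
  have hk : (0 : ℝ) < 1 / (k + 1) := Nat.one_div_pos_of_nat
  refine measure_ge_le_exp_neg_of_lt_rateFn hΛ (by linarith) (lt_of_lt_of_le ?_ (h _ (by linarith)))
  exact EReal.coe_lt_coe_iff.2 (by linarith)

end NonnegLmgf

lemma rateFn_eq_top_of_measure_gt_eq_zero [IsProbabilityMeasure μ] (hX : Measurable X)
    {u t : ℝ} (h0 : μ {ω | u < X ω} = 0) (hut : u < t) : rateFn μ X t = ⊤ := by
  have hae : ∀ᵐ ω ∂μ, X ω ≤ u := by simpa [ae_iff, not_le] using h0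
  refine (EReal.eq_top_iff_forall_lt _).2 fun c => ?_
  set s := max 0 ((c + 1) / (t - u))
  have hs0 : 0 ≤ s := le_max_left _ _
  have hsc : c + 1 ≤ s * (t - u) := (div_le_iff₀ (sub_pos.2 hut)).1 (le_max_right _ _)
  have hbound : ∀ᵐ ω ∂μ, exp (s * X ω) ≤ exp (s * u) :=
    hae.mono fun ω hω => exp_le_exp.2 (mul_le_mul_of_nonneg_left hω hs0)
  have hint : Integrable (fun ω => exp (s * X ω)) μ :=
    (integrable_const _).mono' (by fun_prop)
      (hbound.mono fun ω hω => by rwa [norm_of_nonneg (exp_pos _).le])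
  have hcgf : cgf X μ s ≤ s * u := by
    rw [cgf, ← log_exp (s * u)]
    refine log_le_log (mgf_pos hint) ?_
    simpa [mgf] using integral_mono_ae hint (integrable_const _) hbound
  calc (c : EReal) < ((s * t - cgf X μ s : ℝ) : EReal) := EReal.coe_lt_coe_iff.2 (by nlinarith)
    _ ≤ rateFn μ X t := coe_sub_cgf_le_rateFn hint

end RateFunction

section Symmetric

variable {Ω : Type*} [MeasurableSpace Ω] {μ : Measure Ω} {X : Ω → ℝ}

lemma SymmetricRV.identDistrib (hsym : SymmetricRV μ X) (hX : Measurable X) :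
    IdentDistrib X (fun ω => -X ω) μ μ :=
  ⟨hX.aemeasurable, hX.neg.aemeasurable, hsym⟩

lemma SymmetricRV.identDistrib_exp (hsym : SymmetricRV μ X) (hX : Measurable X) (s : ℝ) :
    IdentDistrib (fun ω => exp (s * X ω)) (fun ω => exp (-s * X ω)) μ μ := by
  simpa [Function.comp_def] using
    (hsym.identDistrib hX).comp (by fun_prop : Measurable fun x => exp (s * x))

lemma SymmetricRV.integrable_exp_neg (hsym : SymmetricRV μ X) (hX : Measurable X) {s : ℝ}
    (h : Integrable (fun ω => exp (s * X ω)) μ) : Integrable (fun ω => exp (-s * X ω)) μ :=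
  (hsym.identDistrib_exp hX s).integrable_iff.1 h

lemma SymmetricRV.mgf_neg (hsym : SymmetricRV μ X) (hX : Measurable X) (s : ℝ) :
    mgf X μ (-s) = mgf X μ s :=
  (hsym.identDistrib_exp hX s).integral_eq.symm

lemma SymmetricRV.one_le_mgf [IsProbabilityMeasure μ] (hsym : SymmetricRV μ X)
    (hX : Measurable X) {s : ℝ} (h : Integrable (fun ω => exp (s * X ω)) μ) : 1 ≤ mgf X μ s := by
  have hneg := hsym.integrable_exp_neg hX h
  have h2 : 2 ≤ mgf X μ s + mgf X μ (-s) :=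
    calc (2 : ℝ) = ∫ _, (2 : ℝ) ∂μ := by simp
      _ ≤ ∫ ω, (exp (s * X ω) + exp (-s * X ω)) ∂μ := by
          refine integral_mono (integrable_const 2) (h.add hneg) fun ω => ?_
          have := one_le_cosh (s * X ω)
          rw [cosh_eq] at this
          simp only [neg_mul]
          linarith
      _ = mgf X μ s + mgf X μ (-s) := integral_add h hneg
  rw [hsym.mgf_neg hX] at h2
  linarith

lemma SymmetricRV.lmgf_nonneg [IsProbabilityMeasure μ] (hsym : SymmetricRV μ X)
    (hX : Measurable X) (s : ℝ) : 0 ≤ lmgf μ X s := by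
  by_cases h : Integrable (fun ω => exp (s * X ω)) μ
  · rw [lmgf_of_integrable h]
    exact EReal.coe_nonneg.2 (log_nonneg (hsym.one_le_mgf hX h))
  · simp [lmgf_of_not_integrable h]

lemma SymmetricRV.measure_pos_pos [IsProbabilityMeasure μ] (hsym : SymmetricRV μ X)
    (hX : Measurable X) (hne : ¬ ∀ᵐ ω ∂μ, X ω = 0) : 0 < (μ {ω | 0 < X ω}).toReal := by
  have hneg : μ {ω | X ω < 0} = μ {ω | 0 < X ω} := by
    have := (hsym.identDistrib hX).measure_mem_eq (measurableSet_Iio (a := (0 : ℝ)))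
    simpa only [Set.preimage, Set.mem_Iio, neg_lt_zero] using this
  refine ENNReal.toReal_pos (fun h0 => hne ?_) (measure_ne_top μ _)
  rw [ae_iff, ← nonpos_iff_eq_zero]
  calc μ {ω | ¬X ω = 0} ≤ μ ({ω | 0 < X ω} ∪ {ω | X ω < 0}) :=
        measure_mono fun ω hω => (lt_or_gt_of_ne hω).symm
    _ ≤ μ {ω | 0 < X ω} + μ {ω | X ω < 0} := measure_union_le _ _
    _ = 0 := by rw [hneg, h0, add_zero]

end Symmetric

section RateFunctionInverse

variable {Ω : Type*} [MeasurableSpace Ω] {μ : Measure Ω} {X : Ω → ℝ}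

lemma rateFnInv_nonneg (c : ℝ) : 0 ≤ rateFnInv μ X c :=
  Real.sInf_nonneg fun _ hs => hs.1

lemma rateFnInv_le {c t : ℝ} (ht : 0 ≤ t) (hc : (c : EReal) ≤ rateFn μ X t) :
    rateFnInv μ X c ≤ t :=
  csInf_le ⟨0, fun _ hs => hs.1⟩ ⟨ht, hc⟩

lemma rateFn_lt_of_lt_rateFnInv {c t : ℝ} (ht : 0 ≤ t) (h : t < rateFnInv μ X c) :
    rateFn μ X t < c :=
  lt_of_not_ge fun hc => (rateFnInv_le ht hc).not_gt h

lemma rateFnInv_mono (hfin : FiniteLmgfNearZero μ X) : Monotone (rateFnInv μ X) := fun _ _ hcd =>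
  csInf_le_csInf ⟨0, fun _ hs => hs.1⟩ (exists_le_rateFn hfin _)
    fun _ hs => ⟨hs.1, (EReal.coe_le_coe_iff.2 hcd).trans hs.2⟩

lemma measure_gt_pos_of_lt_rateFnInv [IsProbabilityMeasure μ] (hX : Measurable X) {c t : ℝ}
    (ht : 0 ≤ t) (h : t < rateFnInv μ X c) : 0 < (μ {ω | t < X ω}).toReal := by
  refine ENNReal.toReal_pos (fun h0 => ?_) (measure_ne_top μ _)
  have hmid : rateFn μ X ((t + rateFnInv μ X c) / 2) = ⊤ :=
    rateFn_eq_top_of_measure_gt_eq_zero hX h0 (by linarith)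
  have := rateFnInv_le (c := c) (by linarith) (hmid ▸ le_top)
  linarith

variable [IsProbabilityMeasure μ] (hΛ : ∀ s, 0 ≤ lmgf μ X s) (hfin : FiniteLmgfNearZero μ X)
include hΛ hfin

lemma le_rateFn_of_rateFnInv_lt {c t : ℝ} (h : rateFnInv μ X c < t) :
    (c : EReal) ≤ rateFn μ X t := by
  obtain ⟨s, ⟨hs0, hcs⟩, hst⟩ := exists_lt_of_csInf_lt (exists_le_rateFn hfin c) h
  exact hcs.trans (rateFn_monotoneOn hΛ hs0 (hs0.trans hst.le) hst.le)

lemma measure_gt_rateFnInv_le (c : ℝ) :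
    (μ {ω | rateFnInv μ X c < X ω}).toReal ≤ exp (-c) :=
  measure_gt_le_exp_neg hΛ (rateFnInv_nonneg c) fun _ hu => le_rateFn_of_rateFnInv_lt hΛ hfin hu

lemma rateFnInv_pos_of_exp_neg_lt {c : ℝ} (h : exp (-c) < (μ {ω | 0 < X ω}).toReal) :
    0 < rateFnInv μ X c := by
  refine (rateFnInv_nonneg c).lt_of_ne fun h0 => ?_
  have := measure_gt_rateFnInv_le hΛ hfin c
  rw [← h0] at this
  linarith

end RateFunctionInverse

lemma antitone_measure_gt_toReal {Ω : Type*} [MeasurableSpace Ω] {μ : Measure Ω}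
    [IsFiniteMeasure μ] {X : Ω → ℝ} : Antitone fun t : ℝ => (μ {ω | t < X ω}).toReal :=
  fun _ _ hst => ENNReal.toReal_mono (measure_ne_top μ _)
    (measure_mono fun _ hω => lt_of_le_of_lt hst hω)

section LowerTail

variable {Ω : Type*} [MeasurableSpace Ω] {μ : Measure Ω} [IsProbabilityMeasure μ] {X : Ω → ℝ}

variable (hΛ : ∀ s, 0 ≤ lmgf μ X s) {δ : ℝ} (hδ0 : 0 < δ) (hδ1 : δ < 1)
include hΛ hδ0 hδ1

lemma exists_pos_le_measure_gt_mul_rateFnInv_of_bddAbove (hX : Measurable X)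
    (hfin : FiniteLmgfNearZero μ X) (hpos : 0 < (μ {ω | 0 < X ω}).toReal)
    (hbdd : BddAbove (Set.range (rateFnInv μ X))) :
    ∃ p > 0, ∀ c, p ≤ (μ {ω | (1 - δ) * rateFnInv μ X c < X ω}).toReal := by
  set M := sSup (Set.range (rateFnInv μ X))
  obtain ⟨c₀, hc₀⟩ := (tendsto_exp_neg_atTop_nhds_zero.eventually_lt_const hpos).exists
  have hM : 0 < M :=
    (rateFnInv_pos_of_exp_neg_lt hΛ hfin hc₀).trans_le (le_csSup hbdd ⟨c₀, rfl⟩)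
  obtain ⟨_, ⟨c₁, rfl⟩, hc₁⟩ :=
    exists_lt_of_lt_csSup (Set.range_nonempty _) (by nlinarith : (1 - δ) * M < M)
  refine ⟨_, measure_gt_pos_of_lt_rateFnInv hX (by nlinarith) hc₁, fun c => ?_⟩
  exact antitone_measure_gt_toReal
    (mul_le_mul_of_nonneg_left (le_csSup hbdd ⟨c, rfl⟩) (by linarith))

lemma eventually_exp_le_measure_gt_mul_rateFnInv_of_tendsto (hreg : RegularUpperTails μ X)
    (hR : Tendsto (rateFnInv μ X) atTop atTop) :
    ∀ᶠ c in atTop,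
      exp (-(1 - δ / 4) * c) ≤ (μ {ω | (1 - δ) * rateFnInv μ X c < X ω}).toReal := by
  obtain ⟨T, hT⟩ := eventually_atTop.1 (hreg (δ / 4) (by positivity))
  filter_upwards [(hR.const_mul_atTop (sub_pos.2 hδ1)).eventually_ge_atTop T,
    hR.eventually_gt_atTop 0, eventually_ge_atTop 0] with c hcT hRpos hc
  set R := rateFnInv μ X c
  have hβ : 0 < 1 - δ / 2 := by linarith
  have hbelow : rateFn μ X ((1 - δ) / (1 - δ / 2) * R) < c := by
    have hfrac : (1 - δ) / (1 - δ / 2) < 1 := (div_lt_one hβ).2 (by linarith)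
    have hfrac0 : 0 ≤ (1 - δ) / (1 - δ / 2) := div_nonneg (by linarith) hβ.le
    exact rateFn_lt_of_lt_rateFnInv (by positivity) (by nlinarith)
  have hscaled : rateFn μ X ((1 - δ) * R) ≤ (((1 - δ / 2) * c : ℝ) : EReal) := by
    have heq : (1 - δ / 2) * ((1 - δ) / (1 - δ / 2) * R) = (1 - δ) * R := by
      rw [← mul_assoc, mul_div_cancel₀ _ hβ.ne']
    simpa only [heq] using rateFn_mul_le hΛ hβ.le (by linarith) hbelow.le
  obtain ⟨r, hr⟩ : ∃ r : ℝ, rateFn μ X ((1 - δ) * R) = r :=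
    ⟨_, (EReal.coe_toReal (ne_top_of_le_ne_top (EReal.coe_ne_top _) hscaled)
      (ne_bot_of_le_ne_bot EReal.zero_ne_bot (rateFn_nonneg _))).symm⟩
  have hr0 : 0 ≤ r := EReal.coe_nonneg.1 (hr ▸ rateFn_nonneg _)
  have hrc : r ≤ (1 - δ / 2) * c := EReal.coe_le_coe_iff.1 (hr ▸ hscaled)
  calc exp (-(1 - δ / 4) * c) ≤ exp (-(1 + δ / 4) * r) :=
        exp_le_exp.2 (by nlinarith [mul_nonneg (sq_nonneg δ) hc])
    _ ≤ _ := (hT _ hcT r hr).1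

lemma eventually_exp_le_measure_gt_mul_rateFnInv (hX : Measurable X)
    (hfin : FiniteLmgfNearZero μ X) (hreg : RegularUpperTails μ X)
    (hpos : 0 < (μ {ω | 0 < X ω}).toReal) :
    ∀ᶠ c in atTop,
      exp (-(1 - δ / 4) * c) ≤ (μ {ω | (1 - δ) * rateFnInv μ X c < X ω}).toReal := by
  by_cases hbdd : BddAbove (Set.range (rateFnInv μ X))
  · obtain ⟨p, hp, hle⟩ :=
      exists_pos_le_measure_gt_mul_rateFnInv_of_bddAbove hΛ hδ0 hδ1 hX hfin hpos hbdd
    have hexp : Tendsto (fun c => exp (-(1 - δ / 4) * c)) atTop (𝓝 0) :=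
      tendsto_exp_atBot.comp (tendsto_id.const_mul_atTop_of_neg (by linarith))
    filter_upwards [hexp.eventually_lt_const hp] with c hc using hc.le.trans (hle c)
  · exact eventually_exp_le_measure_gt_mul_rateFnInv_of_tendsto hΛ hδ0 hδ1 hreg
      (tendsto_atTop_atTop_of_monotone' (rateFnInv_mono hfin) hbdd)

end LowerTail

section Quantile

variable {Ω : Type*} [MeasurableSpace Ω] (μ : Measure Ω) (X : Ω → ℝ)

noncomputable def tailQuantile (p : ℝ) : ℝ :=
  sInf {t : ℝ | 0 < t ∧ (μ {ω | t < X ω}).toReal ≤ p}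

variable {μ X}

lemma tailQuantile_le {p t : ℝ} (ht : 0 < t) (hp : (μ {ω | t < X ω}).toReal ≤ p) :
    tailQuantile μ X p ≤ t :=
  csInf_le ⟨0, fun _ hs => hs.1.le⟩ ⟨ht, hp⟩

lemma le_tailQuantile [IsFiniteMeasure μ] {p s t : ℝ} (hs : 0 < s)
    (hsp : (μ {ω | s < X ω}).toReal ≤ p) (htp : p < (μ {ω | t < X ω}).toReal) :
    t ≤ tailQuantile μ X p :=
  le_csInf ⟨s, hs, hsp⟩ fun _ hu => le_of_not_gt fun hut =>
    (htp.trans_le (antitone_measure_gt_toReal hut.le)).not_ge hu.2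

end Quantile

lemma exists_tendsto_zero_one_sub_mul_le {ι : Type*} {l : Filter ι} {a b : ι → ℝ}
    (ha : ∀ᶠ i in l, 0 < a i) (h : ∀ δ, 0 < δ → δ < 1 → ∀ᶠ i in l, (1 - δ) * a i ≤ b i) :
    ∃ ε : ι → ℝ, Tendsto ε l (𝓝 0) ∧ ∀ᶠ i in l, (1 - ε i) * a i ≤ b i := by
  refine ⟨fun i => max 0 (1 - b i / a i), tendsto_order.2 ⟨fun d hd =>
    Eventually.of_forall fun i => hd.trans_le (le_max_left _ _), fun d hd => ?_⟩,
    ha.mono fun i hi => ?_⟩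
  · have hδd : min (d / 2) (1 / 2) < d := (min_le_left _ _).trans_lt (half_lt_self hd)
    have hδ1 : min (d / 2) (1 / 2) < 1 := (min_le_right _ _).trans_lt one_half_lt_one
    filter_upwards [ha, h _ (by positivity) hδ1] with i hi hδ
    have : 1 - min (d / 2) (1 / 2) ≤ b i / a i := (le_div_iff₀ hi).2 hδ
    exact max_lt hd (by linarith)
  · have : 1 - max 0 (1 - b i / a i) ≤ b i / a i := by
      linarith [le_max_right 0 (1 - b i / a i)]
    calc (1 - max 0 (1 - b i / a i)) * a i ≤ b i / a i * a i :=
          mul_le_mul_of_nonneg_right this hi.le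
      _ = b i := div_mul_cancel₀ _ hi.ne'

lemma eventually_lt_rpow_of_tendsto_log_div_log {w : ℕ → ℝ}
    (hw : Tendsto (fun n : ℕ => log (w n) / log n) atTop (𝓝 0)) {η : ℝ} (hη : 0 < η) :
    ∀ᶠ n : ℕ in atTop, w n < (n : ℝ) ^ η := by
  filter_upwards [hw.eventually_lt_const hη, eventually_gt_atTop 1] with n hn h1
  have hn0 : (0 : ℝ) < n := by positivity
  have hlog : 0 < log n := log_pos (by exact_mod_cast h1)
  rcases le_or_gt (w n) 0 with hw0 | hw0
  · exact hw0.trans_lt (rpow_pos_of_pos hn0 η)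
  · rw [← exp_log hw0, rpow_def_of_pos hn0]
    exact exp_lt_exp.2 (by rw [div_lt_iff₀ hlog] at hn; linarith)

theorem quantile_asymptotics_general {Ω : Type*} [MeasurableSpace Ω] (μ : Measure Ω)
    [IsProbabilityMeasure μ] (X : Ω → ℝ) (hX : Measurable X)
    (hgood : Good μ X) (hne : ¬ (∀ᵐ ω ∂μ, X ω = 0))
    (α : ℝ) (hα : 0 < α)
    (w : ℕ → ℝ) (hwtop : Tendsto w atTop atTop)
    (hwsmall : Tendsto (fun n : ℕ => Real.log (w n) / Real.log n) atTop (nhds 0)) :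
    ∃ ε : ℕ → ℝ, Tendsto ε atTop (nhds 0) ∧
      ∀ᶠ n : ℕ in atTop,
        (1 - ε n) * rateFnInv μ X (α * Real.log n) ≤
            sInf {t : ℝ | 0 < t ∧ (μ {ω | t < X ω}).toReal ≤ w n * (n : ℝ) ^ (-α)} ∧
          sInf {t : ℝ | 0 < t ∧ (μ {ω | t < X ω}).toReal ≤ w n * (n : ℝ) ^ (-α)} ≤
            rateFnInv μ X (α * Real.log n) := by
  obtain ⟨hsym, hfin, hreg⟩ := hgood
  have hΛ := hsym.lmgf_nonneg hX
  have hpos := hsym.measure_pos_pos hX hne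
  have hc : Tendsto (fun n : ℕ => α * log n) atTop atTop :=
    (tendsto_log_atTop.comp tendsto_natCast_atTop_atTop).const_mul_atTop hα
  have hadmissible : ∀ᶠ n : ℕ in atTop, 0 < rateFnInv μ X (α * log n) ∧
      (μ {ω | rateFnInv μ X (α * log n) < X ω}).toReal ≤ w n * (n : ℝ) ^ (-α) := by
    filter_upwards [hc.eventually (tendsto_exp_neg_atTop_nhds_zero.eventually_lt_const hpos),
      hwtop.eventually_ge_atTop 1, eventually_gt_atTop 0] with n hexp hw1 hn
    refine ⟨rateFnInv_pos_of_exp_neg_lt hΛ hfin hexp, (measure_gt_rateFnInv_le hΛ hfin _).trans ?_⟩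
    rw [← neg_mul, mul_comm, ← rpow_def_of_pos (by positivity)]
    exact le_mul_of_one_le_left (by positivity) hw1
  obtain ⟨ε, hε, hlower⟩ := exists_tendsto_zero_one_sub_mul_le (hadmissible.mono fun _ h => h.1)
    fun δ hδ0 hδ1 => by
      filter_upwards [hadmissible,
        hc.eventually (eventually_exp_le_measure_gt_mul_rateFnInv hΛ hδ0 hδ1 hX hfin hreg hpos),
        eventually_lt_rpow_of_tendsto_log_div_log hwsmall (by positivity : 0 < δ / 4 * α),
        eventually_gt_atTop 0] with n ⟨hR0, hRw⟩ hexp hw hn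
      refine le_tailQuantile hR0 hRw (lt_of_lt_of_le ?_ hexp)
      calc w n * (n : ℝ) ^ (-α) < (n : ℝ) ^ (δ / 4 * α) * (n : ℝ) ^ (-α) := by gcongr
        _ = exp (-(1 - δ / 4) * (α * log n)) := by
          rw [← rpow_add (by positivity), rpow_def_of_pos (by positivity)]
          ring_nf
  exact ⟨ε, hε, hlower.and (hadmissible.mono fun _ h => tailQuantile_le h.1 h.2)⟩

/-- Lemma on `x_n`: for a good random variable `X` which is not a.s. `0`,
`α > 0`, and a positive sequence `ω_n → ∞` with `ω_n = n^{o(1)}`, the quantile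
`x_n = inf {t > 0 : P(X > t) ≤ ω_n n^{-α}}` satisfies, for all large `n`,
`(1 - o(1)) Λ*⁻¹(α log n) ≤ x_n ≤ Λ*⁻¹(α log n)`. -/
theorem quantile_asymptotics {Ω : Type*} [MeasurableSpace Ω] (μ : Measure Ω)
    [IsProbabilityMeasure μ] (X : Ω → ℝ) (hX : Measurable X)
    (hgood : Good μ X) (hne : ¬ (∀ᵐ ω ∂μ, X ω = 0))
    (α : ℝ) (hα : 0 < α)
    (w : ℕ → ℝ) (hwpos : ∀ n, 0 < w n) (hwtop : Tendsto w atTop atTop)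
    (hwsmall : Tendsto (fun n : ℕ => Real.log (w n) / Real.log n) atTop (nhds 0)) :
    ∃ ε : ℕ → ℝ, Tendsto ε atTop (nhds 0) ∧
      ∀ᶠ n : ℕ in atTop,
        (1 - ε n) * rateFnInv μ X (α * Real.log n) ≤
            sInf {t : ℝ | 0 < t ∧ (μ {ω | t < X ω}).toReal ≤ w n * (n : ℝ) ^ (-α)} ∧
          sInf {t : ℝ | 0 < t ∧ (μ {ω | t < X ω}).toReal ≤ w n * (n : ℝ) ^ (-α)} ≤
            rateFnInv μ X (α * Real.log n) :=
  quantile_asymptotics_general μ X hX hgood hne α hα w hwtop hwsmall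
end

section
/- Let H₀ be a fixed balanced graph with v vertices, ℓ edges, and density d = ℓ/v. With i.i.d. good edge-weights on K_n, let W_n be the maximum total weight of a copy of H₀ in K_n. Then for δ_n = (log n)^{−1/2}, P(W_n > (1+δ_n) ℓ Λ*⁻¹(d⁻¹ log n)) ≤ exp(−δ_n v log n), and in particular W_n ≤ (1+o(1)) ℓ Λ*⁻¹(d⁻¹ log n) with high probability. -/
open MeasureTheory ProbabilityTheory Real Filter

/-!
A copy of `H₀` has weight `S_ℓ`, a sum of `ℓ` independent copies of `ξ`, and there are at most
`n ^ v` copies, so a union bound reduces the claim to a tail bound for `S_ℓ`. Chernoff's bound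
gives `P(S_ℓ ≥ ℓ x) ≤ exp(-ℓ r)` whenever `r < Λ*(x)`. Symmetry makes `Λ ≥ 0`, so `Λ*` is
superlinear (`Λ*(c x) ≥ c Λ*(x)` for `c ≥ 1`) and `Λ*(0) = 0`; hence just above
`(1 + δ) Λ*⁻¹(t)` the rate function exceeds `(1 + δ) t`. With `t = (v / ℓ) log n` this yields
`n ^ v · exp(-(1 + δ) v log n) = exp(-δ v log n)`, and for fixed `δ = ε` the bound tends to `0`.
-/

namespace MeasureTheory

variable {α : Type*} [MeasurableSpace α] {μ : Measure α}

lemma measure_lt_le_of_forall_lt {f : α → ℝ} {a : ℝ} {B : ENNReal}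
    (h : ∀ b, a < b → μ {x | b ≤ f x} ≤ B) : μ {x | a < f x} ≤ B := by
  have hunion : {x | a < f x} = ⋃ k : ℕ, {x | a + 1 / ((k : ℝ) + 1) ≤ f x} := by
    ext x
    simp only [Set.mem_ofPred_eq, Set.mem_iUnion]
    refine ⟨fun hx => ?_, fun ⟨k, hk⟩ => (lt_add_of_pos_right a (by positivity)).trans_le hk⟩
    obtain ⟨k, hk⟩ := exists_nat_one_div_lt (sub_pos.mpr hx)
    exact ⟨k, by linarith⟩
  have hmono : Monotone fun k : ℕ => {x | a + 1 / ((k : ℝ) + 1) ≤ f x} := by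
    intro k k' hkk' x hx
    simp only [Set.mem_ofPred_eq] at hx ⊢
    have : 1 / ((k' : ℝ) + 1) ≤ 1 / ((k : ℝ) + 1) :=
      one_div_le_one_div_of_le (by positivity) (by exact_mod_cast Nat.succ_le_succ hkk')
    linarith
  rw [hunion, hmono.measure_iUnion]
  exact iSup_le fun k => h _ (lt_add_of_pos_right a (by positivity))

lemma measure_lt_iSup_le_sum {ι : Type*} [Fintype ι] {g : ι → α → ℝ} {a : ℝ} (ha : 0 ≤ a) :
    μ {x | a < ⨆ i, g i x} ≤ ∑ i, μ {x | a < g i x} := by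
  refine (measure_mono fun x hx => ?_).trans (measure_iUnion_fintype_le μ _)
  simp only [Set.mem_ofPred_eq, Set.mem_iUnion] at hx ⊢
  cases isEmpty_or_nonempty ι
  · rw [Real.iSup_of_isEmpty] at hx
    exact absurd ha (not_le.mpr hx)
  · exact exists_lt_of_lt_ciSup hx

end MeasureTheory

namespace ProbabilityTheory

variable {Ω : Type*} [MeasurableSpace Ω] {μ : Measure Ω} {ξ : Ω → ℝ}

lemma lt_rateFn_iff {r x : ℝ} :
    (r : EReal) < rateFn μ ξ x ↔
      ∃ s, Integrable (fun ω => exp (s * ξ ω)) μ ∧ r < s * x - cgf ξ μ s := by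
  simp only [rateFn, lt_iSup_iff, lmgf]
  refine exists_congr fun s => ?_
  split_ifs with hint
  · rw [← EReal.coe_sub, EReal.coe_lt_coe_iff]
    exact ⟨fun h => ⟨hint, h⟩, And.right⟩
  · simp [hint]

lemma SymmetricRV.identDistrib_neg (hξ : Measurable ξ) (hsym : SymmetricRV μ ξ) :
    IdentDistrib ξ (fun ω => -ξ ω) μ μ :=
  ⟨hξ.aemeasurable, hξ.neg.aemeasurable, hsym⟩

lemma FiniteLmgfNearZero.exists_lt_rateFn (hfin : FiniteLmgfNearZero μ ξ) (t : ℝ) :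
    ∃ x, 0 ≤ x ∧ (t : EReal) < rateFn μ ξ x := by
  obtain ⟨δ, hδ, hfin⟩ := hfin
  have hu : |δ / 2| < δ := by rw [abs_of_pos (half_pos hδ)]; linarith
  have hint : Integrable (fun ω => exp (δ / 2 * ξ ω)) μ := by
    by_contra hint
    exact hfin _ hu (if_neg hint)
  refine ⟨(|t| + |cgf ξ μ (δ / 2)| + 1) / (δ / 2), by positivity,
    lt_rateFn_iff.mpr ⟨δ / 2, hint, ?_⟩⟩
  rw [mul_div_cancel₀ _ (half_pos hδ).ne']
  linarith [le_abs_self t, le_abs_self (cgf ξ μ (δ / 2))]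

variable [IsProbabilityMeasure μ]

lemma SymmetricRV.cgf_nonneg (hξ : Measurable ξ) (hsym : SymmetricRV μ ξ) {s : ℝ}
    (hint : Integrable (fun ω => exp (s * ξ ω)) μ) : 0 ≤ cgf ξ μ s := by
  have hid := (hsym.identDistrib_neg hξ).comp (measurable_const_mul s).exp
  have hint_neg : Integrable (fun ω => exp (s * -ξ ω)) μ := hid.integrable_iff.mp hint
  -- `exp a + exp (-a) ≥ 2`, and both terms have the same mean by symmetry
  have h2 : (2 : ℝ) ≤ ∫ ω, (exp (s * ξ ω) + exp (s * -ξ ω)) ∂μ := by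
    have hpt : ∀ ω, (2 : ℝ) ≤ exp (s * ξ ω) + exp (s * -ξ ω) := fun ω => by
      linarith [add_one_le_exp (s * ξ ω), add_one_le_exp (s * -ξ ω)]
    simpa using integral_mono (integrable_const 2) (hint.add hint_neg) hpt
  have heq : ∫ ω, exp (s * -ξ ω) ∂μ = ∫ ω, exp (s * ξ ω) ∂μ := hid.integral_eq.symm
  rw [integral_add hint hint_neg, heq] at h2
  exact log_nonneg (by rw [mgf]; linarith)

lemma SymmetricRV.rateFn_zero_nonpos (hξ : Measurable ξ) (hsym : SymmetricRV μ ξ) :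
    rateFn μ ξ 0 ≤ 0 := by
  refine not_lt.mp fun h => ?_
  obtain ⟨s, hint, hs⟩ := lt_rateFn_iff.mp (by exact_mod_cast h : ((0 : ℝ) : EReal) < _)
  linarith [hsym.cgf_nonneg hξ hint]

lemma SymmetricRV.mul_lt_rateFn_mul (hξ : Measurable ξ) (hsym : SymmetricRV μ ξ)
    {c r x : ℝ} (hc : 1 ≤ c) (h : (r : EReal) < rateFn μ ξ x) :
    ((c * r : ℝ) : EReal) < rateFn μ ξ (c * x) := by
  obtain ⟨s, hint, hs⟩ := lt_rateFn_iff.mp h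
  refine lt_rateFn_iff.mpr ⟨s, hint, ?_⟩
  nlinarith [hsym.cgf_nonneg hξ hint]

/-- The infimum defining `rateFnInv` need not be attained, hence the strict hypothesis. -/
lemma lt_rateFn_of_mul_rateFnInv_lt (hξ : Measurable ξ) (hsym : SymmetricRV μ ξ)
    (hfin : FiniteLmgfNearZero μ ξ) {c t y : ℝ} (hc : 1 ≤ c) (ht : 0 < t)
    (hy : c * rateFnInv μ ξ t < y) :
    ((c * t : ℝ) : EReal) < rateFn μ ξ y := by
  have hc0 : 0 < c := by linarith
  have hne : {s : ℝ | 0 ≤ s ∧ (t : EReal) ≤ rateFn μ ξ s}.Nonempty :=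
    let ⟨x, hx, hlt⟩ := hfin.exists_lt_rateFn t; ⟨x, hx, hlt.le⟩
  obtain ⟨θ, ⟨hθ0, hθt⟩, hθy⟩ := exists_lt_of_csInf_lt hne ((lt_div_iff₀' hc0).mpr hy)
  have hθ : 0 < θ := by
    refine hθ0.lt_of_ne fun h => ?_
    have := hθt.trans (h ▸ hsym.rateFn_zero_nonpos hξ)
    exact absurd (EReal.coe_nonpos.mp this) (not_le.mpr ht)
  have hcθ : c * θ < y := (lt_div_iff₀' hc0).mp hθy
  have hy0 : 0 < y := (mul_pos hc0 hθ).trans hcθ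
  have hlt : ((c * θ / y * t : ℝ) : EReal) < rateFn μ ξ θ :=
    (EReal.coe_lt_coe_iff.mpr (mul_lt_of_lt_one_left ht ((div_lt_one hy0).mpr hcθ))).trans_le hθt
  -- superlinearity of `rateFn`, applied with the factor `y / θ > c`
  have := hsym.mul_lt_rateFn_mul hξ (c := y / θ) ((one_le_div hθ).mpr (by nlinarith)) hlt
  rwa [show y / θ * (c * θ / y * t) = c * t by field_simp, div_mul_cancel₀ _ hθ.ne'] at this

variable {Ω' ι : Type*} [MeasurableSpace Ω'] {μ' : Measure Ω'} [IsProbabilityMeasure μ']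
  {Y : ι → Ω' → ℝ}

open Finset in
lemma measure_card_mul_le_sum_le (hξ : Measurable ξ) (hsym : SymmetricRV μ ξ)
    (hY : ∀ i, Measurable (Y i)) (hind : iIndepFun Y μ') (hid : ∀ i, IdentDistrib (Y i) ξ μ' μ)
    (F : Finset ι) {x r : ℝ} (hx : 0 ≤ x) (hr : 0 ≤ r) (h : (r : EReal) < rateFn μ ξ x) :
    μ' {ω | #F * x ≤ ∑ i ∈ F, Y i ω} ≤ ENNReal.ofReal (exp (-(#F * r))) := by
  obtain ⟨s, hint, hs⟩ := lt_rateFn_iff.mp h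
  have hcgf := hsym.cgf_nonneg hξ hint
  have hs0 : 0 ≤ s := by
    by_contra! hs0
    nlinarith [mul_nonpos_of_nonpos_of_nonneg hs0.le hx]
  have hintY : ∀ i, Integrable (fun ω => exp (s * Y i ω)) μ' := fun i =>
    ((hid i).comp (measurable_const_mul s).exp).integrable_iff.mpr hint
  have hmgf : mgf (∑ i ∈ F, Y i) μ' s = exp (#F * cgf ξ μ s) := by
    rw [hind.mgf_sum hY, prod_congr rfl fun i _ => mgf_congr_of_identDistrib _ _ (hid i) s,
      prod_const, exp_nat_mul, cgf, exp_log (mgf_pos hint)]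
  have hchernoff := measure_ge_le_exp_mul_mgf (#F * x) hs0
    (hind.integrable_exp_mul_sum hY (s := F) fun i _ => hintY i)
  rw [hmgf, ← exp_add] at hchernoff
  simp only [Finset.sum_apply] at hchernoff
  rw [← ofReal_measureReal]
  refine ENNReal.ofReal_le_ofReal (hchernoff.trans (exp_le_exp.mpr ?_))
  nlinarith [(#F).cast_nonneg (α := ℝ)]

open Finset in
lemma measure_mul_rateFnInv_lt_sum_le (hξ : Measurable ξ) (hsym : SymmetricRV μ ξ)
    (hfin : FiniteLmgfNearZero μ ξ) (hY : ∀ i, Measurable (Y i)) (hind : iIndepFun Y μ')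
    (hid : ∀ i, IdentDistrib (Y i) ξ μ' μ) {c t : ℝ} (hc : 1 ≤ c) (ht : 0 < t)
    {F : Finset ι} (hF : F.Nonempty) :
    μ' {ω | c * #F * rateFnInv μ ξ t < ∑ i ∈ F, Y i ω} ≤
      ENNReal.ofReal (exp (-(c * #F * t))) := by
  have hθ : 0 ≤ rateFnInv μ ξ t := Real.sInf_nonneg fun _ hs => hs.1
  have hF0 : (0 : ℝ) < #F := by exact_mod_cast hF.card_pos
  refine measure_lt_le_of_forall_lt fun b hb => ?_
  have hb : c * rateFnInv μ ξ t < b / #F := by rw [lt_div_iff₀ hF0]; linarith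
  have := measure_card_mul_le_sum_le hξ hsym hY hind hid F
    ((mul_nonneg (by linarith) hθ).trans hb.le) (by positivity)
    (lt_rateFn_of_mul_rateFnInv_lt hξ hsym hfin hc ht hb)
  rwa [mul_div_cancel₀ _ hF0.ne', show (#F : ℝ) * (c * t) = c * #F * t by ring] at this

end ProbabilityTheory

namespace SimpleGraph

lemma card_edgeFinset_subtype_not_isDiag {V : Type*} [DecidableEq V] (G : SimpleGraph V)
    [Fintype G.edgeSet] :
    (G.edgeFinset.subtype fun e => ¬ e.IsDiag).card = G.edgeFinset.card := by
  rw [Finset.card_subtype, Finset.filter_true_of_mem fun e he =>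
    G.not_isDiag_of_mem_edgeSet (mem_edgeFinset.mp he)]

end SimpleGraph

lemma graphWeight_eq_sum {n : ℕ} (x : EdgeT n → ℝ) (G : SimpleGraph (Fin n))
    [Fintype G.edgeSet] :
    graphWeight x G = ∑ e ∈ G.edgeFinset.subtype (fun e : Sym2 (Fin n) => ¬ e.IsDiag), x e := by
  have hmem : ∀ e : EdgeT n, e ∈ G.edgeFinset.subtype (fun e : Sym2 (Fin n) => ¬ e.IsDiag) ↔
      (e : Sym2 (Fin n)) ∈ G.edgeSet := by
    simp [Finset.mem_subtype]
  rw [graphWeight, ← Finset.sum_subset (Finset.subset_univ _) fun e _ he =>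
    Set.indicator_of_notMem (s := {e : EdgeT n | (e : Sym2 (Fin n)) ∈ G.edgeSet})
      (mt (hmem e).mpr he) x]
  exact Finset.sum_congr rfl fun e he =>
    Set.indicator_of_mem (s := {e : EdgeT n | (e : Sym2 (Fin n)) ∈ G.edgeSet}) ((hmem e).mp he) x
section Copies

variable {Ω : Type*} [MeasurableSpace Ω] {μ : Measure Ω} [IsProbabilityMeasure μ] {ξ : Ω → ℝ}
  {Ω' : Type*} [MeasurableSpace Ω'] {μ' : Measure Ω'} [IsProbabilityMeasure μ']
  {v ℓ n : ℕ} (H₀ : SimpleGraph (Fin v)) [DecidableRel H₀.Adj] {X : EdgeT n → Ω' → ℝ}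

lemma measure_graphWeight_map_gt_le (hξ : Measurable ξ) (hsym : SymmetricRV μ ξ)
    (hfin : FiniteLmgfNearZero μ ξ) (hX : ∀ e, Measurable (X e)) (hind : iIndepFun X μ')
    (hid : ∀ e, IdentDistrib (X e) ξ μ' μ) (hv : 0 < v) (hℓ : H₀.edgeFinset.card = ℓ)
    (hn : 2 ≤ n) {δ : ℝ} (hδ : 0 < δ) (f : Fin v ↪ Fin n) :
    μ' {ω | (1 + δ) * ℓ * rateFnInv μ ξ (((ℓ : ℝ) / v)⁻¹ * log n) <
        graphWeight (fun e => X e ω) (H₀.map f)} ≤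
      ENNReal.ofReal (exp (-((1 + δ) * v * log n))) := by
  simp only [graphWeight_eq_sum]
  set F := (H₀.map f).edgeFinset.subtype fun e : Sym2 (Fin n) => ¬ e.IsDiag
  have hF : F.card = ℓ := by
    rw [SimpleGraph.card_edgeFinset_subtype_not_isDiag, ← hℓ]
    convert H₀.card_edgeFinset_map f
  rcases ℓ.eq_zero_or_pos with rfl | hℓ0
  · simp [Finset.card_eq_zero.mp hF]
  have hL : 0 < log n := log_pos (by exact_mod_cast hn)
  have := measure_mul_rateFnInv_lt_sum_le hξ hsym hfin hX hind hid (by linarith : 1 ≤ 1 + δ)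
    (by positivity : 0 < ((ℓ : ℝ) / v)⁻¹ * log n) (Finset.card_pos.mp (hF ▸ hℓ0))
  rw [hF] at this
  convert this using 4
  field_simp

lemma measure_iSup_graphWeight_map_gt_le (hξ : Measurable ξ) (hsym : SymmetricRV μ ξ)
    (hfin : FiniteLmgfNearZero μ ξ) (hX : ∀ e, Measurable (X e)) (hind : iIndepFun X μ')
    (hid : ∀ e, IdentDistrib (X e) ξ μ' μ) (hv : 0 < v) (hℓ : H₀.edgeFinset.card = ℓ)
    (hn : 2 ≤ n) {δ : ℝ} (hδ : 0 < δ) :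
    μ' {ω | (1 + δ) * ℓ * rateFnInv μ ξ (((ℓ : ℝ) / v)⁻¹ * log n) <
        ⨆ f : Fin v ↪ Fin n, graphWeight (fun e => X e ω) (H₀.map f)} ≤
      ENNReal.ofReal (exp (-δ * v * log n)) := by
  have hθ : 0 ≤ rateFnInv μ ξ (((ℓ : ℝ) / v)⁻¹ * log n) := Real.sInf_nonneg fun _ hs => hs.1
  have hcard : Fintype.card (Fin v ↪ Fin n) ≤ n ^ v := by
    simpa only [Fintype.card_embedding_eq, Fintype.card_fin] using n.descFactorial_le_pow v
  have hpow : (n : ℝ) ^ v = exp (v * log n) := by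
    rw [exp_nat_mul, exp_log (by positivity)]
  calc _ ≤ ∑ f : Fin v ↪ Fin n, μ' {ω | (1 + δ) * ℓ * rateFnInv μ ξ (((ℓ : ℝ) / v)⁻¹ * log n) <
        graphWeight (fun e => X e ω) (H₀.map f)} :=
        measure_lt_iSup_le_sum (mul_nonneg (by positivity) hθ)
    _ ≤ ∑ _f : Fin v ↪ Fin n, ENNReal.ofReal (exp (-((1 + δ) * v * log n))) :=
        Finset.sum_le_sum fun f _ =>
          measure_graphWeight_map_gt_le H₀ hξ hsym hfin hX hind hid hv hℓ hn hδ f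
    _ ≤ (n ^ v : ℕ) * ENNReal.ofReal (exp (-((1 + δ) * v * log n))) := by
        rw [Finset.sum_const, nsmul_eq_mul, Finset.card_univ]
        gcongr
    _ = ENNReal.ofReal (exp (-δ * v * log n)) := by
        rw [← ENNReal.ofReal_natCast, ← ENNReal.ofReal_mul (by positivity), Nat.cast_pow, hpow,
          ← exp_add]
        ring_nf

end Copies

lemma tendsto_ofReal_exp_neg_mul_log {c : ℝ} (hc : 0 < c) :
    Tendsto (fun n : ℕ => ENNReal.ofReal (exp (-c * log n))) atTop (nhds 0) := by
  have hlog : Tendsto (fun n : ℕ => -c * log n) atTop atBot :=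
    (tendsto_log_atTop.comp tendsto_natCast_atTop_atTop).const_mul_atTop_of_neg (by linarith)
  simpa using ENNReal.tendsto_ofReal (tendsto_exp_atBot.comp hlog)

theorem balanced_copy_upper_general {Ω₀ : Type*} [MeasurableSpace Ω₀] (μ₀ : Measure Ω₀)
    [IsProbabilityMeasure μ₀] (ξ : Ω₀ → ℝ) (hξ : Measurable ξ) (hgood : Good μ₀ ξ)
    (v ℓ : ℕ) (hv : 0 < v) (H₀ : SimpleGraph (Fin v)) [DecidableRel H₀.Adj]
    (hℓ : H₀.edgeFinset.card = ℓ)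
    {Ω : ℕ → Type*} [∀ n, MeasurableSpace (Ω n)] (μ : ∀ n, Measure (Ω n))
    [∀ n, IsProbabilityMeasure (μ n)]
    (X : ∀ n, EdgeT n → Ω n → ℝ) (hmeas : ∀ n e, Measurable (X n e))
    (hind : ∀ n, iIndepFun (X n) (μ n))
    (hid : ∀ n e, IdentDistrib (X n e) ξ (μ n) μ₀) :
    (∀ n : ℕ, 2 ≤ n →
      μ n {ω | (1 + Real.log n ^ (-(1/2 : ℝ))) * ℓ *
            rateFnInv μ₀ ξ (((ℓ : ℝ) / (v : ℝ))⁻¹ * Real.log n) <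
          ⨆ f : Fin v ↪ Fin n,
            graphWeight (fun e => X n e ω) (SimpleGraph.map f H₀)} ≤
        ENNReal.ofReal (Real.exp (-(Real.log n ^ (-(1/2 : ℝ))) * v * Real.log n))) ∧
    (∀ ε : ℝ, 0 < ε →
      Tendsto (fun n : ℕ => μ n {ω | (1 + ε) * ℓ *
            rateFnInv μ₀ ξ (((ℓ : ℝ) / (v : ℝ))⁻¹ * Real.log n) <
          ⨆ f : Fin v ↪ Fin n,
            graphWeight (fun e => X n e ω) (SimpleGraph.map f H₀)}) atTop (nhds 0)) := by
  obtain ⟨hsym, hfin, -⟩ := hgood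
  have hbound : ∀ n, 2 ≤ n → ∀ δ : ℝ, 0 < δ → _ := fun n hn δ hδ =>
    measure_iSup_graphWeight_map_gt_le H₀ hξ hsym hfin (hmeas n) (hind n) (hid n) hv hℓ hn hδ
  refine ⟨fun n hn => hbound n hn _ (rpow_pos_of_pos (log_pos (by exact_mod_cast hn)) _),
    fun ε hε => ?_⟩
  refine tendsto_of_tendsto_of_tendsto_of_le_of_le' tendsto_const_nhds
    (tendsto_ofReal_exp_neg_mul_log (by positivity : 0 < ε * v)) (.of_forall fun _ => zero_le)
    ((eventually_ge_atTop 2).mono fun n hn => (hbound n hn ε hε).trans_eq ?_)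
  rw [neg_mul]

/-- for a fixed balanced graph `H₀` with `v` vertices, `ℓ` edges and density
`d = ℓ/v`, with i.i.d. good edge weights on `K_n`, the maximal weight `W_n` of a copy of
`H₀` satisfies, with `δ_n = (log n)^{-1/2}`,
`P(W_n > (1+δ_n) ℓ Λ*⁻¹(d⁻¹ log n)) ≤ exp(-δ_n v log n)` for each `n ≥ 2`; in particular
`W_n ≤ (1 + o(1)) ℓ Λ*⁻¹(d⁻¹ log n)` with high probability. -/
theorem balanced_copy_upper {Ω₀ : Type*} [MeasurableSpace Ω₀] (μ₀ : Measure Ω₀)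
    [IsProbabilityMeasure μ₀] (ξ : Ω₀ → ℝ) (hξ : Measurable ξ) (hgood : Good μ₀ ξ)
    (v ℓ : ℕ) (hv : 0 < v) (H₀ : SimpleGraph (Fin v)) [DecidableRel H₀.Adj]
    (hℓ : H₀.edgeFinset.card = ℓ)
    (hbal : ∀ H' : H₀.Subgraph, H'.verts.Nonempty →
      (H'.edgeSet.ncard : ℝ) / (H'.verts.ncard : ℝ) ≤ (ℓ : ℝ) / (v : ℝ))
    {Ω : ℕ → Type*} [∀ n, MeasurableSpace (Ω n)] (μ : ∀ n, Measure (Ω n))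
    [∀ n, IsProbabilityMeasure (μ n)]
    (X : ∀ n, EdgeT n → Ω n → ℝ) (hmeas : ∀ n e, Measurable (X n e))
    (hind : ∀ n, iIndepFun (X n) (μ n))
    (hid : ∀ n e, IdentDistrib (X n e) ξ (μ n) μ₀) :
    (∀ n : ℕ, 2 ≤ n →
      μ n {ω | (1 + Real.log n ^ (-(1/2 : ℝ))) * ℓ *
            rateFnInv μ₀ ξ (((ℓ : ℝ) / (v : ℝ))⁻¹ * Real.log n) <
          ⨆ f : Fin v ↪ Fin n,
            graphWeight (fun e => X n e ω) (SimpleGraph.map f H₀)} ≤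
        ENNReal.ofReal (Real.exp (-(Real.log n ^ (-(1/2 : ℝ))) * v * Real.log n))) ∧
    (∀ ε : ℝ, 0 < ε →
      Tendsto (fun n : ℕ => μ n {ω | (1 + ε) * ℓ *
            rateFnInv μ₀ ξ (((ℓ : ℝ) / (v : ℝ))⁻¹ * Real.log n) <
          ⨆ f : Fin v ↪ Fin n,
            graphWeight (fun e => X n e ω) (SimpleGraph.map f H₀)}) atTop (nhds 0)) :=
  balanced_copy_upper_general μ₀ ξ hξ hgood v ℓ hv H₀ hℓ μ X hmeas hind hid
end
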